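/- If a string B occurs in a text W at two positions x and y with x < y and the occurrences overlap (i.e., y < x + |B|), then B is a concatenation of copies of the period P = W[x : y-1] (of length p = y - x), i.e., B = P^k P' where k = floor(|B| / p) and P' is the prefix of P of length |B| mod p. -/

import Mathlib

/-!
Writing `V` for the suffix of `W` starting at position `x` and `P` for its first `p = y - x`
letters, both `B` and `P ++ B` are prefixes of `V`, so `B` is a prefix of `P ++ B`. Such a `B`
either is a prefix of `P` or is `P ++ D` with `D` again a prefix of `P ++ D`; peeling off copies
of `P` this way gives the decomposition.
-/

/-- `Q` occurs in `W` at (1-indexed) position `i`. -/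
def Occurs {α : Type*} (Q W : List α) (i : ℕ) : Prop :=
  1 ≤ i ∧ i + Q.length - 1 ≤ W.length ∧ (W.drop (i - 1)).take Q.length = Q

/-- k-fold concatenation of `P`. -/
def RepPow {α : Type*} (P : List α) (k : ℕ) : List α :=
  (List.replicate k P).flatten

section Periodicity

variable {α : Type*}

theorem repPow_succ (P : List α) (k : ℕ) : RepPow P (k + 1) = P ++ RepPow P k := by
  simp [RepPow, List.replicate_succ]

theorem prefix_take_append_of_take_eq_of_drop_take_eq {V B : List α} {p : ℕ}
    (h₀ : V.take B.length = B) (hp : (V.drop p).take B.length = B) :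
    B <+: V.take p ++ B := by
  have hB : B <+: V := List.prefix_iff_eq_take.mpr h₀.symm
  have hPB : V.take p ++ B <+: V := by
    conv_rhs => rw [← List.take_append_drop p V]
    exact (List.prefix_append_right_inj _).mpr (List.prefix_iff_eq_take.mpr hp.symm)
  exact List.prefix_of_prefix_length_le hB hPB (by simp)

theorem eq_repPow_append_take_of_prefix_append {P B : List α} (hP : 0 < P.length)
    (h : B <+: P ++ B) :
    B = RepPow P (B.length / P.length) ++ P.take (B.length % P.length) := by
  rcases lt_or_ge B.length P.length with hlt | hle
  · have hBP : B <+: P := List.prefix_of_prefix_length_le h (List.prefix_append P B) hlt.le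
    rw [Nat.div_eq_of_lt hlt, Nat.mod_eq_of_lt hlt]
    simpa [RepPow] using List.prefix_iff_eq_take.mp hBP
  · obtain ⟨D, rfl⟩ : P <+: B := List.prefix_of_prefix_length_le (List.prefix_append P B) h hle
    have hD : D <+: P ++ D := (List.prefix_append_right_inj P).mp h
    rw [List.length_append, Nat.add_div_left _ hP, Nat.add_mod_left, repPow_succ,
      List.append_assoc, ← eq_repPow_append_take_of_prefix_append hP hD]
termination_by B.length
decreasing_by grind

end Periodicity

/-- overlapping occurrences force a periodic decomposition. -/
theorem overlap_periodic_decomposition {α : Type*} (W B : List α) (x y : ℕ)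
    (hx : Occurs B W x) (hy : Occurs B W y) (hxy : x < y)
    (hov : y < x + B.length) :
    B = RepPow ((W.drop (x - 1)).take (y - x)) (B.length / (y - x)) ++
        ((W.drop (x - 1)).take (y - x)).take (B.length % (y - x)) := by
  obtain ⟨hx1, -, hxB⟩ := hx
  obtain ⟨-, -, hyB⟩ := hy
  set V := W.drop (x - 1)
  have hyV : (V.drop (y - x)).take B.length = B := by
    rwa [List.drop_drop, show x - 1 + (y - x) = y - 1 by omega]
  have hBV : B.length ≤ V.length := (List.prefix_iff_eq_take.mpr hxB.symm).length_le
  have hP : (V.take (y - x)).length = y - x := List.length_take_of_le (by omega)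
  have hdec := eq_repPow_append_take_of_prefix_append (by omega)
    (prefix_take_append_of_take_eq_of_drop_take_eq hxB hyV)
  rwa [hP] at hdec
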